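/- For every Q > 0 there exists ε_0 > 0 such that for all 0 < ε < ε_0 the function F_ε(A) = S_1(A^{−1}) − ε S_n(A^{−1}) satisfies, for every positive definite Hermitian n×n matrix A with S_1(A^{−1}) < Q: F_ε(A) > 0, and at diagonal such A, ∂_{ii}F_ε(A) < 0 for all i, Σ_{k=1}^n (−λ_k ∂_{kk}F_ε(A)) = S_1(A^{−1}) − nε S_n(A^{−1}), and (1/2) F_ε(A) < Σ_{k=1}^n (−λ_k ∂_{kk}F_ε(A)) ≤ S_1(A^{−1}), where λ_1,…,λ_n are the eigenvalues of A. -/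

import Mathlib

/-- `S_k(A)` for an `n × n` matrix `A`: the `k`-th elementary symmetric function of the
eigenvalues of `A`, i.e. the coefficient of `(-x)^(n-k)` in `det (A - x I)`. -/
noncomputable def SmatR (n : ℕ) (k : ℤ) (A : Matrix (Fin n) (Fin n) ℝ) : ℝ :=
  if 0 ≤ k ∧ k ≤ (n : ℤ) then (-1 : ℝ) ^ k.toNat * (Matrix.charpoly A).coeff (n - k.toNat)
  else 0

/-- `∂_{ij} G (A)`: the partial derivative of a function `G` of a matrix with respect to the
`(i,j)` entry, at the matrix `A`. -/
noncomputable def pd (n : ℕ) (G : Matrix (Fin n) (Fin n) ℝ → ℝ) (i j : Fin n)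
    (A : Matrix (Fin n) (Fin n) ℝ) : ℝ :=
  deriv (fun t : ℝ => G (A + t • Matrix.single i j 1)) 0

/-- `S_1(A⁻¹) = S_{n-1}(A)/S_n(A)`, the sum of the reciprocals of the eigenvalues of `A`. -/
noncomputable def S1inv (n : ℕ) (A : Matrix (Fin n) (Fin n) ℝ) : ℝ :=
  SmatR n ((n : ℤ) - 1) A / SmatR n (n : ℤ) A

/-- `S_n(A⁻¹) = S_0(A)/S_n(A) = 1/det A`. -/
noncomputable def Sninv (n : ℕ) (A : Matrix (Fin n) (Fin n) ℝ) : ℝ :=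
  SmatR n 0 A / SmatR n (n : ℤ) A

/-- The operator `F_ε(A) = S_1(A⁻¹) - ε S_n(A⁻¹)`. -/
noncomputable def Fe (n : ℕ) (ε : ℝ) (A : Matrix (Fin n) (Fin n) ℝ) : ℝ :=
  S1inv n A - ε * Sninv n A

/-!
If `∑ 1/λ_k < Q` then every `λ_k > 1/Q`, so `∏_{j ≠ i} λ_j ≥ Q^{-(n-1)}` and
`ε S_n(A⁻¹) = ε / ∏ λ ≤ ε Q^{n-1} / λ_i`. With `ε₀ = 1/(2n Q^{n-1})` this gives
`2n ε S_n(A⁻¹) < 1/λ_i` for every `i`, from which all the inequalities follow. At a diagonal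
matrix, moving the `(i,i)` entry moves only the eigenvalue `λ_i`, and
`-λ_i ∂_{ii} F_ε = 1/λ_i - ε S_n(A⁻¹)`.
-/

open Polynomial Matrix Finset Filter Topology

lemma Polynomial.coeff_one_prod_X_sub_C {R ι : Type*} [CommRing R] [DecidableEq ι]
    (s : Finset ι) (f : ι → R) :
    (∏ i ∈ s, (X - C (f i))).coeff 1 = ∑ i ∈ s, ∏ j ∈ s.erase i, -f j := by
  have h := coeff_derivative (∏ i ∈ s, (X - C (f i))) 0
  simp only [Nat.cast_zero, zero_add, mul_one] at h
  rw [← h, derivative_prod_finset, finsetSum_coeff]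
  simp [coeff_zero_prod]

section SymmetricFunctions

variable {n : ℕ} {A : Matrix (Fin n) (Fin n) ℝ} {μ : Fin n → ℝ}

lemma SmatR_zero (A : Matrix (Fin n) (Fin n) ℝ) : SmatR n 0 A = 1 := by
  simpa [SmatR] using A.charpoly_monic.coeff_natDegree

lemma SmatR_self_of_charpoly_eq (hA : A.charpoly = ∏ i, (X - C (μ i))) :
    SmatR n n A = ∏ i, μ i := by
  simp [SmatR, hA, coeff_zero_prod, prod_neg, ← mul_assoc, ← mul_pow]

lemma SmatR_sub_one_of_charpoly_eq (hn : 0 < n) (hA : A.charpoly = ∏ i, (X - C (μ i))) :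
    SmatR n (n - 1) A = ∑ i, ∏ j ∈ univ.erase i, μ j := by
  have hk : ((n : ℤ) - 1).toNat = n - 1 := by omega
  rw [SmatR, if_pos (by omega), hk, Nat.sub_sub_self hn, hA, coeff_one_prod_X_sub_C, mul_sum]
  simp [prod_neg, card_erase_of_mem, ← mul_assoc, ← mul_pow]

lemma S1inv_of_charpoly_eq (hn : 0 < n) (hA : A.charpoly = ∏ i, (X - C (μ i)))
    (hμ : ∀ i, μ i ≠ 0) : S1inv n A = ∑ i, (μ i)⁻¹ := by
  rw [S1inv, SmatR_self_of_charpoly_eq hA, SmatR_sub_one_of_charpoly_eq hn hA, sum_div]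
  refine sum_congr rfl fun i _ => ?_
  rw [← mul_prod_erase _ _ (mem_univ i),
    div_mul_cancel_right₀ (prod_ne_zero_iff.mpr fun j _ => hμ j)]

lemma Sninv_of_charpoly_eq (hA : A.charpoly = ∏ i, (X - C (μ i))) :
    Sninv n A = (∏ i, μ i)⁻¹ := by
  rw [Sninv, SmatR_self_of_charpoly_eq hA, SmatR_zero, one_div]

lemma Fe_of_charpoly_eq (hn : 0 < n) (ε : ℝ) (hA : A.charpoly = ∏ i, (X - C (μ i)))
    (hμ : ∀ i, μ i ≠ 0) : Fe n ε A = ∑ i, (μ i)⁻¹ - ε * (∏ i, μ i)⁻¹ := by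
  rw [Fe, S1inv_of_charpoly_eq hn hA hμ, Sninv_of_charpoly_eq hA]

end SymmetricFunctions

lemma Matrix.diagonal_add_smul_single {m R : Type*} [DecidableEq m] [Semiring R] (d : m → R)
    (i : m) (t : R) :
    diagonal d + t • single i i 1 = diagonal (Function.update d i (d i + t)) := by
  rw [← diagonal_single, ← diagonal_smul, diagonal_add]
  congr 1
  ext k
  rcases eq_or_ne k i with rfl | hk <;> simp [*]

lemma pd_Fe_diagonal {n : ℕ} (hn : 0 < n) (ε : ℝ) {lam : Fin n → ℝ}
    (hlam : ∀ k, 0 < lam k) (i : Fin n) :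
    pd n (Fe n ε) i i (diagonal lam) = -((lam i)⁻¹ - ε * (∏ j, lam j)⁻¹) / lam i := by
  set P := ∏ j ∈ univ \ {i}, lam j
  set c := ∑ j ∈ univ \ {i}, (lam j)⁻¹
  have hev : (fun t => Fe n ε (diagonal lam + t • single i i 1))
      =ᶠ[𝓝 0] fun t => (1 - ε * P⁻¹) * (lam i + t)⁻¹ + c := by
    filter_upwards [Ioi_mem_nhds (neg_lt_zero.mpr (hlam i))] with t ht
    have hpos : ∀ k, 0 < Function.update lam i (lam i + t) k := by
      intro k
      rcases eq_or_ne k i with rfl | hk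
      · simpa [neg_lt_iff_pos_add, add_comm] using ht
      · simpa [hk] using hlam k
    rw [diagonal_add_smul_single, Fe_of_charpoly_eq hn ε (charpoly_diagonal _)
      (fun k => (hpos k).ne'), prod_update_of_mem (mem_univ i)]
    simp only [Function.apply_update (fun _ x => x⁻¹)]
    rw [sum_update_of_mem (mem_univ i), mul_inv]
    ring
  have hderiv : HasDerivAt (fun t => (1 - ε * P⁻¹) * (lam i + t)⁻¹ + c)
      ((1 - ε * P⁻¹) * (-1 / lam i ^ 2)) 0 := by
    simpa using ((((hasDerivAt_id (0 : ℝ)).const_add (lam i)).inv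
      (by simpa using (hlam i).ne')).const_mul (1 - ε * P⁻¹)).add_const c
  have hprod : ∏ j, lam j = lam i * P := prod_eq_mul_prod_sdiff_singleton_of_mem (mem_univ i) _
  have hi := (hlam i).ne'
  have hP : P ≠ 0 := prod_ne_zero_iff.mpr fun j _ => (hlam j).ne'
  rw [pd, hev.deriv_eq, hderiv.deriv, hprod]
  field_simp

lemma sum_neg_mul_pd_Fe_diagonal {n : ℕ} (hn : 0 < n) (ε : ℝ) {lam : Fin n → ℝ}
    (hlam : ∀ k, 0 < lam k) :
    ∑ k, -(lam k) * pd n (Fe n ε) k k (diagonal lam) =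
      ∑ k, (lam k)⁻¹ - n * (ε * (∏ k, lam k)⁻¹) := by
  have hterm (k : Fin n) :
      -(lam k) * pd n (Fe n ε) k k (diagonal lam) = (lam k)⁻¹ - ε * (∏ j, lam j)⁻¹ := by
    rw [pd_Fe_diagonal hn ε hlam]
    field_simp [(hlam k).ne']
  simp [hterm, sum_sub_distrib]

section Estimate

variable {ι : Type*} [Fintype ι] {μ : ι → ℝ} {Q ε : ℝ}

lemma inv_le_sum_inv (hμ : ∀ k, 0 < μ k) (k : ι) : (μ k)⁻¹ ≤ ∑ j, (μ j)⁻¹ :=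
  single_le_sum (fun j _ => (inv_pos.2 (hμ j)).le) (mem_univ k)

lemma inv_lt_of_sum_inv_lt (hμ : ∀ k, 0 < μ k) (hS : ∑ k, (μ k)⁻¹ < Q) (k : ι) :
    Q⁻¹ < μ k :=
  inv_lt_of_inv_lt₀ (hμ k) ((inv_le_sum_inv hμ k).trans_lt hS)

lemma pos_of_sum_inv_lt (hμ : ∀ k, 0 < μ k) (hS : ∑ k, (μ k)⁻¹ < Q) (i : ι) : 0 < Q :=
  (inv_pos.2 (hμ i)).trans_le (inv_le_sum_inv hμ i) |>.trans hS

lemma mul_inv_prod_le_of_sum_inv_lt [DecidableEq ι] (hμ : ∀ k, 0 < μ k)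
    (hS : ∑ k, (μ k)⁻¹ < Q) (hε : 0 ≤ ε) (i : ι) :
    ε * (∏ k, μ k)⁻¹ ≤ ε * Q ^ (Fintype.card ι - 1) * (μ i)⁻¹ := by
  have hQ := pos_of_sum_inv_lt hμ hS i
  have hP : (Q ^ (Fintype.card ι - 1))⁻¹ ≤ ∏ j ∈ univ.erase i, μ j := by
    simpa [card_erase_of_mem] using
      prod_le_prod (s := univ.erase i) (fun _ _ => (inv_pos.2 hQ).le)
        (fun j _ => (inv_lt_of_sum_inv_lt hμ hS j).le)
  rw [← mul_prod_erase univ μ (mem_univ i), mul_inv]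
  calc ε * ((μ i)⁻¹ * (∏ j ∈ univ.erase i, μ j)⁻¹)
      ≤ ε * ((μ i)⁻¹ * Q ^ (Fintype.card ι - 1)) := by
        gcongr
        · exact (inv_pos.2 (hμ i)).le
        · exact inv_le_of_inv_le₀ (by positivity) hP
    _ = ε * Q ^ (Fintype.card ι - 1) * (μ i)⁻¹ := by ring

lemma two_mul_card_mul_inv_prod_lt [DecidableEq ι] (hμ : ∀ k, 0 < μ k)
    (hS : ∑ k, (μ k)⁻¹ < Q) (hε : 0 ≤ ε)
    (hε₀ : ε < (2 * Fintype.card ι * Q ^ (Fintype.card ι - 1))⁻¹) (i : ι) :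
    2 * Fintype.card ι * (ε * (∏ k, μ k)⁻¹) < (μ i)⁻¹ := by
  have hQ := pos_of_sum_inv_lt hμ hS i
  have hK : 0 < 2 * (Fintype.card ι : ℝ) * Q ^ (Fintype.card ι - 1) := by
    have : 0 < Fintype.card ι := Fintype.card_pos_iff.2 ⟨i⟩
    positivity
  have hεK : ε * (2 * Fintype.card ι * Q ^ (Fintype.card ι - 1)) < 1 := by
    simpa using (lt_inv_mul_iff₀' hK).1 (by rwa [mul_one])
  calc 2 * Fintype.card ι * (ε * (∏ k, μ k)⁻¹)
      ≤ 2 * Fintype.card ι * (ε * Q ^ (Fintype.card ι - 1) * (μ i)⁻¹) :=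
        mul_le_mul_of_nonneg_left (mul_inv_prod_le_of_sum_inv_lt hμ hS hε i) (by positivity)
    _ = ε * (2 * Fintype.card ι * Q ^ (Fintype.card ι - 1)) * (μ i)⁻¹ := by ring
    _ < (μ i)⁻¹ := mul_lt_of_lt_one_left (inv_pos.2 (hμ i)) hεK

lemma two_mul_card_sub_one_mul_inv_prod_lt_sum_inv [DecidableEq ι] [Nonempty ι]
    (hμ : ∀ k, 0 < μ k) (hS : ∑ k, (μ k)⁻¹ < Q) (hε : 0 ≤ ε)
    (hε₀ : ε < (2 * Fintype.card ι * Q ^ (Fintype.card ι - 1))⁻¹) :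
    (2 * Fintype.card ι - 1) * (ε * (∏ k, μ k)⁻¹) < ∑ k, (μ k)⁻¹ := by
  obtain ⟨i⟩ := ‹Nonempty ι›
  have ha : 0 ≤ ε * (∏ k, μ k)⁻¹ :=
    mul_nonneg hε (inv_pos.2 (prod_pos fun k _ => hμ k)).le
  linarith [two_mul_card_mul_inv_prod_lt hμ hS hε hε₀ i, inv_le_sum_inv hμ i]

end Estimate

/-- Lemma 4.1 (1): for every `Q > 0` there is `ε₀ > 0` such that for all `0 < ε < ε₀`,
`F_ε(A) = S_1(A⁻¹) - ε S_n(A⁻¹)` satisfies, for every positive definite Hermitian `A` with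
`S_1(A⁻¹) < Q`: `F_ε(A) > 0`; and at diagonal such `A` with eigenvalues `λ_1, …, λ_n`:
`∂_{ii}F_ε(A) < 0` for all `i`,
`Σ_k (-λ_k ∂_{kk}F_ε(A)) = S_1(A⁻¹) - n ε S_n(A⁻¹)`, and
`(1/2) F_ε(A) < Σ_k (-λ_k ∂_{kk}F_ε(A)) ≤ S_1(A⁻¹)`. -/
theorem statement9 (n : ℕ) (hn : 0 < n) (Q : ℝ) (hQ : 0 < Q) :
    ∃ ε₀ > 0, ∀ ε : ℝ, 0 < ε → ε < ε₀ →
      (∀ A : Matrix (Fin n) (Fin n) ℝ, A.PosDef → S1inv n A < Q → 0 < Fe n ε A) ∧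
      (∀ lam : Fin n → ℝ, (Matrix.diagonal lam).PosDef →
          S1inv n (Matrix.diagonal lam) < Q →
        (∀ i : Fin n, pd n (Fe n ε) i i (Matrix.diagonal lam) < 0) ∧
        (∑ k : Fin n, -(lam k) * pd n (Fe n ε) k k (Matrix.diagonal lam)) =
          S1inv n (Matrix.diagonal lam) - (n : ℝ) * ε * Sninv n (Matrix.diagonal lam) ∧
        (1 / 2) * Fe n ε (Matrix.diagonal lam) <
          (∑ k : Fin n, -(lam k) * pd n (Fe n ε) k k (Matrix.diagonal lam)) ∧
        (∑ k : Fin n, -(lam k) * pd n (Fe n ε) k k (Matrix.diagonal lam)) ≤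
          S1inv n (Matrix.diagonal lam)) := by
  have : NeZero n := ⟨hn.ne'⟩
  have hn' : (1 : ℝ) ≤ n := by exact_mod_cast hn
  refine ⟨(2 * n * Q ^ (n - 1))⁻¹, by positivity, fun ε hε hε₀ => ⟨fun A hA hS => ?_,
    fun lam hlam hS => ?_⟩⟩
  · have hμ := hA.eigenvalues_pos
    have hA' : A.charpoly = ∏ i, (X - C (hA.1.eigenvalues i)) := by
      simpa using hA.1.charpoly_eq
    rw [S1inv_of_charpoly_eq hn hA' fun k => (hμ k).ne'] at hS
    rw [Fe_of_charpoly_eq hn ε hA' fun k => (hμ k).ne']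
    have ha : 0 < ε * (∏ k, hA.1.eigenvalues k)⁻¹ :=
      mul_pos hε (inv_pos.2 (prod_pos fun k _ => hμ k))
    have := two_mul_card_sub_one_mul_inv_prod_lt_sum_inv hμ hS hε.le (by simpa using hε₀)
    simp only [Fintype.card_fin] at this
    nlinarith
  · have hμ := posDef_diagonal_iff.mp hlam
    have hA := charpoly_diagonal lam
    rw [S1inv_of_charpoly_eq hn hA fun k => (hμ k).ne'] at hS ⊢
    rw [Sninv_of_charpoly_eq hA, Fe_of_charpoly_eq hn ε hA fun k => (hμ k).ne',
      sum_neg_mul_pd_Fe_diagonal hn ε hμ]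
    have ha : 0 < ε * (∏ k, lam k)⁻¹ := mul_pos hε (inv_pos.2 (prod_pos fun k _ => hμ k))
    have hlt := two_mul_card_mul_inv_prod_lt hμ hS hε.le (by simpa using hε₀)
    have hsum := two_mul_card_sub_one_mul_inv_prod_lt_sum_inv hμ hS hε.le (by simpa using hε₀)
    simp only [Fintype.card_fin] at hlt hsum
    refine ⟨fun i => ?_, by ring, by linarith, by nlinarith⟩
    rw [pd_Fe_diagonal hn ε hμ i]
    exact div_neg_of_neg_of_pos (by nlinarith [hlt i]) (hμ i)
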